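/- Define, for complex x with Re x > 0, G̃(x) = exp( ∫_0^∞ f_G(s;x) ds ) with f_G(s;x) = (1/s) [ (1/2)(1−x)(2−x) e^{−s} + (1−x) e^{−s}/(1 − e^{−s}) − (e^{−xs} − e^{−s})/(1 − e^{−s})² ]. Then G̃(1) = 1 and G̃ satisfies the Barnes functional equation G̃(x+1) = Γ(x) · G̃(x) for every complex x with Re x > 0, where Γ is the complex gamma function. -/

import Mathlib

open Complex MeasureTheory

/-- The integrand `f_G(s; x) = (1/s)[ (1/2)(1−x)(2−x) e^{−s} + (1−x) e^{−s}/(1 − e^{−s})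
  − (e^{−xs} − e^{−s})/(1 − e^{−s})² ]`. -/
noncomputable def fG (x : ℂ) (s : ℝ) : ℂ :=
  (1 / (s : ℂ)) *
    ((1 / 2) * (1 - x) * (2 - x) * Complex.exp (-(s : ℂ)) +
      (1 - x) * Complex.exp (-(s : ℂ)) / (1 - Complex.exp (-(s : ℂ))) -
      (Complex.exp (-x * (s : ℂ)) - Complex.exp (-(s : ℂ))) / (1 - Complex.exp (-(s : ℂ))) ^ 2)

/-- `G̃(x) = exp(∫_0^∞ f_G(s; x) ds)`. -/
noncomputable def Gtilde (x : ℂ) : ℂ := Complex.exp (∫ s in Set.Ioi (0 : ℝ), fG x s)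

/-!
Over the common denominator `t (1 - e^{-t})²`, `f_G(t; x)` is an exponential polynomial
`∑ aᵢ e^{rᵢ t}` whose first three moments `∑ aᵢ rᵢ^m` vanish, so `f_G(·; x)` is bounded near `0`
and decays exponentially at `∞`; hence it is integrable. The difference
`f_G(t; x + 1) - f_G(t; x)` is Malmstén's integrand for `log Γ(x)`. Expanding `1 / (1 - e^{-t})`
geometrically and using Frullani's integral `∫₀^∞ (e^{-t} - e^{-zt}) / t dt = log z` (obtained from
`(e^{-t} - e^{-zt}) / t = ∫₀¹ (z - 1) e^{-(1 + u(z - 1))t} du` by Fubini), the partial sums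
integrate to the logarithm of Gauss's sequence `n^x n! / (x (x + 1) ⋯ (x + n))`, and the
remainder is `e^{-(n-1)t}` times an integrable function. Gauss's limit formula then gives
`exp ∫ (f_G(·; x + 1) - f_G(·; x)) = Γ(x)`.
-/

open Set Filter Asymptotics Finset
open scoped Topology Nat

lemma cexp_neg_natCast_mul (k : ℕ) (z : ℂ) : cexp (-k * z) = cexp (-z) ^ k := by
  rw [← Complex.exp_nat_mul]
  ring_nf

lemma one_sub_cexp_neg_ne_zero {t : ℝ} (ht : t ≠ 0) : 1 - cexp (-t) ≠ 0 := by
  rw [← Complex.ofReal_neg, ← Complex.ofReal_exp, ← Complex.ofReal_one, ← Complex.ofReal_sub,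
    Complex.ofReal_ne_zero, sub_ne_zero, ne_comm, Ne, Real.exp_eq_one_iff, neg_eq_zero]
  exact ht

lemma integrableOn_Ioi_zero_of_isBigO {E : Type*} [NormedAddCommGroup E] [NormedSpace ℂ E]
    {f : ℝ → E} {ρ : ℝ} (hρ : 0 < ρ) (hf : ContinuousOn f (Ioi 0))
    (h_top : f =O[atTop] fun t => Real.exp (-ρ * t)) (h_bot : f =O[𝓝[>] 0] fun _ => (1 : ℝ)) :
    IntegrableOn f (Ioi 0) := by
  -- `MellinConvergent f 1` is integrability of `f` on `(0, ∞)`.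
  have := mellinConvergent_of_isBigO_rpow_exp (s := 1) (b := 0) hρ
    (hf.locallyIntegrableOn measurableSet_Ioi) h_top (by simpa using h_bot) (by norm_num)
  simpa [MellinConvergent] using this

lemma hasDerivAt_one_sub_cexp_neg : HasDerivAt (fun t : ℝ => 1 - cexp (-t)) 1 0 := by
  simpa using ((hasDerivAt_id (0 : ℝ)).ofReal_comp.neg.cexp).const_sub 1

lemma isBigO_self_one_sub_cexp_neg : (fun t : ℝ => t) =O[𝓝 0] fun t => 1 - cexp (-t) := by
  simpa [Function.comp_def] using
    (hasDerivAt_one_sub_cexp_neg.isTheta_sub one_ne_zero).isBigO_symm.comp_tendsto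
      (tendsto_id.prodMk tendsto_const_pure)

lemma isBigO_inv_mul_one_sub_cexp_neg_sq :
    (fun t : ℝ => ((t : ℂ) * (1 - cexp (-t)) ^ 2)⁻¹) =O[𝓝[>] 0] fun t => (t ^ 3)⁻¹ := by
  have h_id : (fun t : ℝ => t) =O[𝓝[>] 0] fun t => (t : ℂ) :=
    isBigO_of_le _ fun t => by rw [Complex.norm_real]
  have h : (fun t : ℝ => t ^ 3) =O[𝓝[>] 0] fun t => (t : ℂ) * (1 - cexp (-t)) ^ 2 := by
    simpa only [← pow_succ'] using
      h_id.mul ((isBigO_self_one_sub_cexp_neg.mono nhdsWithin_le_nhds).pow 2)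
  refine h.inv_rev ?_
  filter_upwards [self_mem_nhdsWithin] with t ht h0
  exact absurd h0 (pow_ne_zero 3 (ne_of_gt ht))

lemma tendsto_inv_mul_one_sub_cexp_neg_sq :
    Tendsto (fun t : ℝ => ((t : ℂ) * (1 - cexp (-t)) ^ 2)⁻¹) atTop (𝓝 0) := by
  have h_inv : Tendsto (fun t : ℝ => (t : ℂ)⁻¹) atTop (𝓝 0) := by
    simpa [Function.comp_def] using
      (Complex.continuous_ofReal.tendsto 0).comp tendsto_inv_atTop_zero
  have h_exp : Tendsto (fun t : ℝ => cexp (-t)) atTop (𝓝 0) := by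
    rw [tendsto_zero_iff_norm_tendsto_zero]
    simpa [Complex.norm_exp] using Real.tendsto_exp_neg_atTop_nhds_zero
  have h_sq : Tendsto (fun t : ℝ => ((1 - cexp (-t)) ^ 2)⁻¹) atTop (𝓝 1) := by
    simpa using ((tendsto_const_nhds.sub h_exp).pow 2).inv₀ (by norm_num : ((1 : ℂ) - 0) ^ 2 ≠ 0)
  simpa [mul_inv, mul_comm] using h_inv.mul h_sq

section ExpPolynomial

variable {ι : Type*} [Fintype ι]

lemma isBigO_cexp_mul_sub_taylor (c : ℂ) (n : ℕ) :
    (fun t : ℝ => cexp (c * t) - ∑ m ∈ range n, (c * t) ^ m / m !) =O[𝓝 0] fun t => t ^ n := by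
  refine IsBigO.of_bound (‖c‖ ^ n * Real.exp ‖c‖) ?_
  filter_upwards [Metric.closedBall_mem_nhds (0 : ℝ) one_pos] with t ht
  rw [Metric.mem_closedBall, dist_zero_right] at ht
  calc _ ≤ ‖c * t‖ ^ n * Real.exp ‖c * t‖ := Complex.norm_exp_sub_sum_le_norm_mul_exp _ _
    _ ≤ ‖c‖ ^ n * ‖t‖ ^ n * Real.exp (‖c‖ * 1) := by
        rw [norm_mul, Complex.norm_real, mul_pow]
        gcongr
    _ = ‖c‖ ^ n * Real.exp ‖c‖ * ‖t ^ n‖ := by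
        rw [norm_pow, mul_one]
        ring

lemma isBigO_sum_cexp_of_moments (a r : ι → ℂ) (n : ℕ) (h : ∀ m < n, ∑ i, a i * r i ^ m = 0) :
    (fun t : ℝ => ∑ i, a i * cexp (r i * t)) =O[𝓝 0] fun t => t ^ n := by
  have h_taylor (t : ℝ) : ∑ i, a i * ∑ m ∈ range n, (r i * t) ^ m / m ! = 0 := by
    simp_rw [Finset.mul_sum]
    rw [Finset.sum_comm]
    refine Finset.sum_eq_zero fun m hm => ?_
    calc ∑ i, a i * ((r i * t) ^ m / m !) = (∑ i, a i * r i ^ m) * (t ^ m / m !) := by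
          rw [Finset.sum_mul]
          congr 1 with i
          ring
      _ = 0 := by rw [h m (mem_range.1 hm), zero_mul]
  have h_eq : (fun t : ℝ => ∑ i, a i * cexp (r i * t)) =
      fun t : ℝ => ∑ i, a i * (cexp (r i * t) - ∑ m ∈ range n, (r i * t) ^ m / m !) := by
    funext t
    simp_rw [mul_sub, Finset.sum_sub_distrib, h_taylor, sub_zero]
  rw [h_eq]
  exact IsBigO.fun_sum fun i _ => (isBigO_cexp_mul_sub_taylor (r i) n).const_mul_left (a i)

lemma isBigO_cexp_mul_atTop {r : ℂ} {ρ : ℝ} (h : r.re ≤ -ρ) :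
    (fun t : ℝ => cexp (r * t)) =O[atTop] fun t => Real.exp (-ρ * t) := by
  refine IsBigO.of_bound 1 ?_
  filter_upwards [eventually_ge_atTop 0] with t ht
  rw [Complex.norm_exp, one_mul, Real.norm_of_nonneg (Real.exp_pos _).le, Complex.re_mul_ofReal]
  gcongr

lemma isBigO_sum_cexp_atTop (a r : ι → ℂ) {ρ : ℝ} (h : ∀ i, (r i).re ≤ -ρ) :
    (fun t : ℝ => ∑ i, a i * cexp (r i * t)) =O[atTop] fun t => Real.exp (-ρ * t) :=
  IsBigO.fun_sum fun i _ => (isBigO_cexp_mul_atTop (h i)).const_mul_left (a i)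

lemma integrableOn_sum_cexp_div {a r : ι → ℂ} {ρ : ℝ} (hρ : 0 < ρ)
    (h_rate : ∀ i, (r i).re ≤ -ρ) (h_mom : ∀ m < 3, ∑ i, a i * r i ^ m = 0) :
    IntegrableOn (fun t : ℝ => (∑ i, a i * cexp (r i * t)) / (t * (1 - cexp (-t)) ^ 2))
      (Ioi 0) := by
  simp_rw [div_eq_mul_inv]
  refine integrableOn_Ioi_zero_of_isBigO hρ ?_ ?_ ?_
  · refine (Continuous.continuousOn (by fun_prop)).mul (ContinuousOn.inv₀ (by fun_prop) ?_)
    exact fun t ht => mul_ne_zero (Complex.ofReal_ne_zero.2 (ne_of_gt ht))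
      (pow_ne_zero _ (one_sub_cexp_neg_ne_zero (ne_of_gt ht)))
  · simpa using (isBigO_sum_cexp_atTop a r h_rate).mul
      (tendsto_inv_mul_one_sub_cexp_neg_sq.isBigO_one ℝ)
  · refine (((isBigO_sum_cexp_of_moments a r 3 h_mom).mono nhdsWithin_le_nhds).mul
      isBigO_inv_mul_one_sub_cexp_neg_sq).congr' EventuallyEq.rfl ?_
    filter_upwards [self_mem_nhdsWithin] with t ht
    exact mul_inv_cancel₀ (pow_ne_zero 3 (ne_of_gt ht))

end ExpPolynomial

lemma fG_eq_sum_cexp_div (x : ℂ) {t : ℝ} (ht : t ≠ 0) :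
    fG x t = (∑ i, ![(1 - x) * (2 - x) / 2 + (1 - x) + 1, -((1 - x) * (2 - x)) - (1 - x),
        (1 - x) * (2 - x) / 2, -1] i * cexp (![-1, -2, -3, -x] i * t)) /
      (t * (1 - cexp (-t)) ^ 2) := by
  have h2 : cexp (-2 * t) = cexp (-t) ^ 2 := by exact_mod_cast cexp_neg_natCast_mul 2 t
  have h3 : cexp (-3 * t) = cexp (-t) ^ 3 := by exact_mod_cast cexp_neg_natCast_mul 3 t
  have h0 := one_sub_cexp_neg_ne_zero ht
  have ht' : (t : ℂ) ≠ 0 := Complex.ofReal_ne_zero.2 ht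
  simp only [Fin.sum_univ_four, Matrix.cons_val_zero, Matrix.cons_val_one, Matrix.cons_val_two,
    Matrix.cons_val_three, Matrix.head_cons, Matrix.tail_cons]
  rw [h2, h3, fG]
  field_simp
  ring

lemma integrableOn_fG {x : ℂ} (hx : 0 < x.re) : IntegrableOn (fG x) (Ioi 0) := by
  refine (integrableOn_sum_cexp_div (lt_min hx one_pos) (fun i => ?_) fun m hm => ?_).congr_fun
    (fun t ht => (fG_eq_sum_cexp_div x (ne_of_gt ht)).symm) measurableSet_Ioi
  · fin_cases i <;> simp
  · interval_cases m <;> simp [Fin.sum_univ_four] <;> ring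

noncomputable def frullaniKernel (z : ℂ) (t : ℝ) : ℂ := (cexp (-t) - cexp (-z * t)) / t

section Frullani

variable {z : ℂ}

lemma min_one_re_le_re_segment (z : ℂ) {u : ℝ} (hu : u ∈ Icc (0 : ℝ) 1) :
    min 1 z.re ≤ (1 + u * (z - 1)).re := by
  simp only [Complex.add_re, Complex.one_re, Complex.re_ofReal_mul, Complex.sub_re]
  nlinarith [hu.1, hu.2, min_le_left 1 z.re, min_le_right 1 z.re]

lemma re_segment_pos (hz : 0 < z.re) {u : ℝ} (hu : u ∈ Icc (0 : ℝ) 1) :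
    0 < (1 + u * (z - 1)).re :=
  (lt_min one_pos hz).trans_le (min_one_re_le_re_segment z hu)

lemma integrable_uncurry_frullani (hz : 0 < z.re) :
    Integrable (Function.uncurry fun u t : ℝ => (z - 1) * cexp (-(1 + u * (z - 1)) * t))
      ((volume.restrict (Ioc 0 1)).prod (volume.restrict (Ioi 0))) := by
  refine Integrable.mono' ((integrable_const ‖z - 1‖).mul_prod
    (exp_neg_integrableOn_Ioi 0 (lt_min one_pos hz))) (Continuous.aestronglyMeasurable
    (by fun_prop)) ?_
  rw [Measure.prod_restrict]
  filter_upwards [ae_restrict_mem (measurableSet_Ioc.prod measurableSet_Ioi)] with ⟨u, t⟩ ⟨hu, ht⟩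
  rw [Function.uncurry_apply_pair, norm_mul, Complex.norm_exp, Complex.re_mul_ofReal,
    Complex.neg_re]
  gcongr
  · exact le_of_lt ht
  · exact min_one_re_le_re_segment z (Ioc_subset_Icc_self hu)

lemma integral_Ioi_frullani (hz : 0 < z.re) {u : ℝ} (hu : u ∈ Icc (0 : ℝ) 1) :
    ∫ t in Ioi (0 : ℝ), (z - 1) * cexp (-(1 + u * (z - 1)) * t) = (z - 1) / (1 + u * (z - 1)) := by
  have hre := re_segment_pos hz hu
  have hne : 1 + u * (z - 1) ≠ 0 := fun h => by simp [h] at hre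
  rw [integral_const_mul, integral_exp_mul_complex_Ioi (by rw [Complex.neg_re]; linarith)]
  field_simp
  simp

lemma intervalIntegral_frullani {t : ℝ} (ht : t ≠ 0) :
    ∫ u in (0 : ℝ)..1, (z - 1) * cexp (-(1 + u * (z - 1)) * t) = frullaniKernel z t := by
  have ht' : (t : ℂ) ≠ 0 := Complex.ofReal_ne_zero.2 ht
  have h_deriv (u : ℝ) : HasDerivAt (fun u : ℝ => cexp (-(1 + u * (z - 1)) * t) * (-1 / t))
      ((z - 1) * cexp (-(1 + u * (z - 1)) * t)) u := by
    have h_lin : HasDerivAt (fun u : ℝ => -(1 + (u : ℂ) * (z - 1)) * t) (-(z - 1) * t) u := by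
      simpa using ((((hasDerivAt_id (u : ℂ)).mul_const (z - 1)).const_add 1).neg.mul_const
        (t : ℂ)).comp_ofReal
    exact (h_lin.cexp.mul_const (-1 / (t : ℂ))).congr_deriv (by field_simp)
  rw [intervalIntegral.integral_eq_sub_of_hasDerivAt (fun u _ => h_deriv u)
    (Continuous.intervalIntegrable (by fun_prop) _ _), frullaniKernel]
  push_cast
  ring_nf

lemma intervalIntegral_div_segment (hz : 0 < z.re) :
    ∫ u in (0 : ℝ)..1, (z - 1) / (1 + u * (z - 1)) = Complex.log z := by
  have h_deriv : ∀ u ∈ uIcc (0 : ℝ) 1,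
      HasDerivAt (fun u : ℝ => Complex.log (1 + u * (z - 1))) ((z - 1) / (1 + u * (z - 1))) u := by
    intro u hu
    rw [Set.uIcc_of_le zero_le_one] at hu
    simpa using (((hasDerivAt_id u).ofReal_comp.mul_const (z - 1)).const_add 1).clog_real
      (Or.inl (re_segment_pos hz hu))
  have h_cont : ContinuousOn (fun u : ℝ => (z - 1) / (1 + u * (z - 1))) (uIcc 0 1) := by
    rw [Set.uIcc_of_le zero_le_one]
    exact ContinuousOn.div (by fun_prop) (by fun_prop) fun u hu h0 => by
      simpa [h0] using re_segment_pos hz hu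
  rw [intervalIntegral.integral_eq_sub_of_hasDerivAt h_deriv h_cont.intervalIntegrable]
  simp

lemma integrableOn_frullaniKernel (hz : 0 < z.re) : IntegrableOn (frullaniKernel z) (Ioi 0) := by
  refine (integrable_uncurry_frullani hz).integral_prod_right.congr ?_
  filter_upwards [ae_restrict_mem measurableSet_Ioi] with t ht
  rw [← intervalIntegral_frullani (ne_of_gt ht), intervalIntegral.integral_of_le zero_le_one]
  rfl

theorem integral_frullaniKernel (hz : 0 < z.re) :
    ∫ t in Ioi (0 : ℝ), frullaniKernel z t = Complex.log z := by
  calc ∫ t in Ioi (0 : ℝ), frullaniKernel z t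
      = ∫ t in Ioi (0 : ℝ), ∫ u in Ioc (0 : ℝ) 1, (z - 1) * cexp (-(1 + u * (z - 1)) * t) := by
        refine setIntegral_congr_fun measurableSet_Ioi fun t ht => ?_
        rw [← intervalIntegral_frullani (ne_of_gt ht), intervalIntegral.integral_of_le zero_le_one]
    _ = ∫ u in Ioc (0 : ℝ) 1, ∫ t in Ioi (0 : ℝ), (z - 1) * cexp (-(1 + u * (z - 1)) * t) :=
        (integral_integral_swap (integrable_uncurry_frullani hz)).symm
    _ = ∫ u in Ioc (0 : ℝ) 1, (z - 1) / (1 + u * (z - 1)) :=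
        setIntegral_congr_fun measurableSet_Ioc fun u hu =>
          integral_Ioi_frullani hz (Ioc_subset_Icc_self hu)
    _ = Complex.log z := by
        rw [← intervalIntegral.integral_of_le zero_le_one, intervalIntegral_div_segment hz]

end Frullani

noncomputable def malmstenKernel (x : ℂ) (t : ℝ) : ℂ :=
  ((x - 1) * cexp (-t) + (cexp (-x * t) - cexp (-t)) / (1 - cexp (-t))) / t

noncomputable def malmstenTail (x : ℂ) (n : ℕ) (t : ℝ) : ℂ :=
  cexp (-t) ^ n * ((cexp (-t) * (1 - cexp (-x * t)) / (1 - cexp (-t)) - x) / t)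

noncomputable def frullaniPartialSum (x : ℂ) (n : ℕ) (t : ℝ) : ℂ :=
  x * frullaniKernel n t + ∑ k ∈ range n, frullaniKernel ↑(k + 1) t
    - ∑ k ∈ range (n + 1), frullaniKernel (x + k) t

section Malmsten

variable {x : ℂ}

lemma fG_add_one (x : ℂ) {t : ℝ} (ht : t ≠ 0) : fG (x + 1) t = fG x t + malmstenKernel x t := by
  have h0 := one_sub_cexp_neg_ne_zero ht
  have ht' : (t : ℂ) ≠ 0 := Complex.ofReal_ne_zero.2 ht
  have h_exp : cexp (-(x + 1) * t) = cexp (-x * t) * cexp (-t) := by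
    rw [← Complex.exp_add]
    ring_nf
  rw [fG, fG, malmstenKernel, h_exp]
  field_simp
  ring

lemma integrableOn_malmstenKernel (hx : 0 < x.re) : IntegrableOn (malmstenKernel x) (Ioi 0) := by
  have hx1 : 0 < (x + 1).re := by simp; linarith
  refine ((integrableOn_fG hx1).sub (integrableOn_fG hx)).congr_fun (fun t ht => ?_)
    measurableSet_Ioi
  simp [fG_add_one x (ne_of_gt ht)]

lemma frullaniKernel_natCast (k : ℕ) (t : ℝ) :
    frullaniKernel k t = (cexp (-t) - cexp (-t) ^ k) / t := by
  rw [frullaniKernel, cexp_neg_natCast_mul]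

lemma frullaniKernel_add_natCast (x : ℂ) (k : ℕ) (t : ℝ) :
    frullaniKernel (x + k) t = (cexp (-t) - cexp (-x * t) * cexp (-t) ^ k) / t := by
  rw [frullaniKernel, ← cexp_neg_natCast_mul, ← Complex.exp_add]
  ring_nf

lemma frullaniPartialSum_eq_malmstenKernel_add_malmstenTail (x : ℂ) (n : ℕ) {t : ℝ}
    (ht : t ≠ 0) : frullaniPartialSum x n t = malmstenKernel x t + malmstenTail x n t := by
  have h0 := one_sub_cexp_neg_ne_zero ht
  have ht' : (t : ℂ) ≠ 0 := Complex.ofReal_ne_zero.2 ht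
  induction n with
  | zero =>
    simp only [frullaniPartialSum, range_zero, sum_empty, zero_add, range_one, sum_singleton,
      Nat.cast_zero, add_zero, neg_zero, zero_mul, Complex.exp_zero, pow_zero, one_mul,
      frullaniKernel, malmstenKernel, malmstenTail]
    field_simp
    ring
  | succ n ih =>
    have h_step : x * frullaniKernel ↑(n + 1) t + frullaniKernel ↑(n + 1) t
        - frullaniKernel (x + ↑(n + 1)) t - x * frullaniKernel n t
        = malmstenTail x (n + 1) t - malmstenTail x n t := by
      rw [frullaniKernel_natCast, frullaniKernel_natCast, frullaniKernel_add_natCast,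
        malmstenTail, malmstenTail]
      field_simp
      ring
    rw [frullaniPartialSum, sum_range_succ, sum_range_succ _ (n + 1)]
    rw [frullaniPartialSum] at ih
    linear_combination ih + h_step

lemma integrableOn_frullaniPartialSum (hx : 0 < x.re) {n : ℕ} (hn : n ≠ 0) :
    IntegrableOn (frullaniPartialSum x n) (Ioi 0) :=
  (((integrableOn_frullaniKernel (by simpa using Nat.pos_of_ne_zero hn)).const_mul x).add
    (integrable_finsetSum _ fun k _ => integrableOn_frullaniKernel (by simp; positivity))).sub
    (integrable_finsetSum _ fun k _ => integrableOn_frullaniKernel (by simp; positivity))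

lemma integral_frullaniPartialSum (hx : 0 < x.re) {n : ℕ} (hn : n ≠ 0) :
    ∫ t in Ioi (0 : ℝ), frullaniPartialSum x n t =
      x * Complex.log n + ∑ k ∈ range n, Complex.log ↑(k + 1)
        - ∑ k ∈ range (n + 1), Complex.log (x + k) := by
  have h_n : 0 < (n : ℂ).re := by simpa using Nat.pos_of_ne_zero hn
  have h_k (k : ℕ) : 0 < (↑(k + 1) : ℂ).re := by simp; positivity
  have h_xk (k : ℕ) : 0 < (x + k).re := by simp; positivity
  have h_first := (integrableOn_frullaniKernel h_n).const_mul x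
  have h_second := integrable_finsetSum (range n) fun k _ => integrableOn_frullaniKernel (h_k k)
  have h_third :=
    integrable_finsetSum (range (n + 1)) fun k _ => integrableOn_frullaniKernel (h_xk k)
  simp only [frullaniPartialSum]
  rw [integral_sub (h_first.fun_add h_second) h_third, integral_add h_first h_second,
    integral_const_mul, integral_finsetSum _ fun k _ => integrableOn_frullaniKernel (h_k k),
    integral_finsetSum _ fun k _ => integrableOn_frullaniKernel (h_xk k),
    integral_frullaniKernel h_n]
  simp only [integral_frullaniKernel (h_k _), integral_frullaniKernel (h_xk _)]

lemma integrableOn_malmstenTail (hx : 0 < x.re) {n : ℕ} (hn : n ≠ 0) :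
    IntegrableOn (malmstenTail x n) (Ioi 0) := by
  refine ((integrableOn_frullaniPartialSum hx hn).sub (integrableOn_malmstenKernel hx)).congr_fun
    (fun t ht => ?_) measurableSet_Ioi
  simp [frullaniPartialSum_eq_malmstenKernel_add_malmstenTail x n (ne_of_gt ht)]

lemma integral_malmstenKernel_add_integral_malmstenTail (hx : 0 < x.re) {n : ℕ} (hn : n ≠ 0) :
    (∫ t in Ioi (0 : ℝ), malmstenKernel x t) + ∫ t in Ioi (0 : ℝ), malmstenTail x n t =
      x * Complex.log n + ∑ k ∈ range n, Complex.log ↑(k + 1)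
        - ∑ k ∈ range (n + 1), Complex.log (x + k) := by
  rw [← integral_add (integrableOn_malmstenKernel hx) (integrableOn_malmstenTail hx hn),
    ← integral_frullaniPartialSum hx hn]
  exact setIntegral_congr_fun measurableSet_Ioi fun t ht =>
    (frullaniPartialSum_eq_malmstenKernel_add_malmstenTail x n (ne_of_gt ht)).symm

lemma cexp_sum_log_eq_GammaSeq (hx : ∀ k : ℕ, x + k ≠ 0) {n : ℕ} (hn : n ≠ 0) :
    cexp (x * Complex.log n + ∑ k ∈ range n, Complex.log ↑(k + 1)
      - ∑ k ∈ range (n + 1), Complex.log (x + k)) = Complex.GammaSeq x n := by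
  rw [Complex.GammaSeq, Complex.cpow_def_of_ne_zero (Nat.cast_ne_zero.2 hn),
    ← prod_range_add_one_eq_factorial, Nat.cast_prod, Complex.exp_sub, Complex.exp_add,
    Complex.exp_sum, Complex.exp_sum, mul_comm (Complex.log n),
    prod_congr rfl fun k _ => Complex.exp_log (Nat.cast_ne_zero.2 k.succ_ne_zero),
    prod_congr rfl fun k _ => Complex.exp_log (hx k)]

lemma tendsto_integral_malmstenTail (hx : 0 < x.re) :
    Tendsto (fun n : ℕ => ∫ t in Ioi (0 : ℝ), malmstenTail x (n + 1) t) atTop (𝓝 0) := by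
  have h_eq (n : ℕ) (t : ℝ) : malmstenTail x (n + 1) t = cexp (-t) ^ n * malmstenTail x 1 t := by
    rw [malmstenTail, malmstenTail, pow_succ, pow_one, mul_assoc]
  have h_norm {t : ℝ} (ht : t ∈ Set.Ioi 0) : ‖cexp (-t)‖ < 1 := by
    rw [Complex.norm_exp, Complex.neg_re, Complex.ofReal_re, Real.exp_lt_one_iff, neg_lt_zero]
    exact ht
  have h_bound (n : ℕ) : ∀ᵐ t ∂volume.restrict (Ioi 0),
      ‖malmstenTail x (n + 1) t‖ ≤ ‖malmstenTail x 1 t‖ := by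
    filter_upwards [ae_restrict_mem measurableSet_Ioi] with t ht
    rw [h_eq, norm_mul, norm_pow]
    exact mul_le_of_le_one_left (norm_nonneg _) (pow_le_one₀ (norm_nonneg _) (h_norm ht).le)
  have h_lim : ∀ᵐ t ∂volume.restrict (Ioi 0),
      Tendsto (fun n : ℕ => malmstenTail x (n + 1) t) atTop (𝓝 0) := by
    filter_upwards [ae_restrict_mem measurableSet_Ioi] with t ht
    have := (tendsto_pow_atTop_nhds_zero_of_norm_lt_one (h_norm ht)).mul_const
      (malmstenTail x 1 t)
    rw [zero_mul] at this
    exact this.congr fun n => (h_eq n t).symm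
  simpa using tendsto_integral_of_dominated_convergence _
    (fun n => (integrableOn_malmstenTail hx n.succ_ne_zero).aestronglyMeasurable)
    (integrableOn_malmstenTail hx one_ne_zero).norm h_bound h_lim

theorem cexp_integral_malmstenKernel (hx : 0 < x.re) :
    cexp (∫ t in Ioi (0 : ℝ), malmstenKernel x t) = Complex.Gamma x := by
  have hx0 (k : ℕ) : x + k ≠ 0 := fun h => by
    have := congrArg Complex.re h
    simp at this
    linarith [(k.cast_nonneg : (0 : ℝ) ≤ k)]
  have h_lim : Tendsto (fun n : ℕ => cexp ((∫ t in Ioi (0 : ℝ), malmstenKernel x t)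
      + ∫ t in Ioi (0 : ℝ), malmstenTail x (n + 1) t)) atTop
      (𝓝 (cexp (∫ t in Ioi (0 : ℝ), malmstenKernel x t))) := by
    simpa [Function.comp_def] using (Complex.continuous_exp.tendsto _).comp
      (tendsto_const_nhds.add (tendsto_integral_malmstenTail hx))
  refine tendsto_nhds_unique (h_lim.congr fun n => ?_)
    ((Complex.GammaSeq_tendsto_Gamma x).comp (tendsto_add_atTop_nat 1))
  rw [Function.comp_apply, integral_malmstenKernel_add_integral_malmstenTail hx n.succ_ne_zero,
    cexp_sum_log_eq_GammaSeq hx0 n.succ_ne_zero]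

end Malmsten

theorem Gtilde_one_and_funEq :
    Gtilde 1 = 1 ∧ ∀ x : ℂ, 0 < x.re → Gtilde (x + 1) = Complex.Gamma x * Gtilde x := by
  refine ⟨by simp [Gtilde, fG], fun x hx => ?_⟩
  rw [Gtilde, Gtilde,
    setIntegral_congr_fun measurableSet_Ioi fun t ht => fG_add_one x (ne_of_gt ht),
    integral_add (integrableOn_fG hx) (integrableOn_malmstenKernel hx), Complex.exp_add,
    cexp_integral_malmstenKernel hx, mul_comm]
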